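/- arXiv:2506.10863 — 2 statements merged into one kernel-verified Lean document; each statement's English description precedes it below -/
import Mathlib

section
/- Let ξ(O; η) = α_r·m·(𝟙(V₂=v₂) − b) + α_g·b·(Y − m) + b·m, where α_r = 𝟙(A=a, Y=1, S=1)/r(a,V₁,W), α_g = 𝟙(A=a)/g(a,V₁,W), r(a,v₁,w) = P(Y=1,A=a,S=1 | V₁=v₁,W=w), g(a,v₁,w) = P(A=a | V₁=v₁,W=w), b = P(V₂=v₂ | Y=1,A=a,V₁,W,S=1), m = E[Y | A=a,V₁,W], with r, g ≥ ε > 0. Then E[ξ(O; η) | V₁=v₁] = Σ_w b(a,v₂,v₁,w)·m(a,v₁,w)·P(W=w | V₁=v₁), i.e., the uncentered transformation is conditionally unbiased for f̃(a,v₁,v₂) when all nuisances are correctly specified. -/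
open scoped Classical BigOperators

/-- Probability of an event under finite weights. -/
noncomputable def Pr {Ω : Type*} [Fintype Ω] (p : Ω → ℝ) (E : Ω → Prop) : ℝ :=
  ∑ ω : Ω, if E ω then p ω else 0

/-- Conditional probability P(E | F). -/
noncomputable def cPr {Ω : Type*} [Fintype Ω] (p : Ω → ℝ) (E F : Ω → Prop) : ℝ :=
  Pr p (fun ω => E ω ∧ F ω) / Pr p F

/-- Conditional expectation E[X | F]. -/
noncomputable def cE {Ω : Type*} [Fintype Ω] (p : Ω → ℝ) (X : Ω → ℝ) (F : Ω → Prop) : ℝ :=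
  (∑ ω : Ω, if F ω then p ω * X ω else 0) / Pr p F

lemma pr_zero {Ω : Type*} [Fintype Ω] (p : Ω → ℝ) (hp : ∀ ω, 0 ≤ p ω)
    (E : Ω → Prop) (h : Pr p E = 0) : ∀ ω, E ω → p ω = 0 := by
  intro ω hω
  have := (Finset.sum_eq_zero_iff_of_nonneg (fun i _ => by
    split_ifs with hc
    · exact hp i
    · exact le_rfl)).mp h ω (Finset.mem_univ ω)
  simpa [hω] using this

set_option maxHeartbeats 1600000 in
/-- the uncentered DR transformation ξ is conditionally unbiased for
f̃(a,v₁,v₂) = Σ_w b·m·P(W=w | V₁=v₁) when all nuisances are correct. -/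
theorem stmt9 {Ω 𝒲 𝒱₁ 𝒱₂ : Type*} [Fintype Ω] [Fintype 𝒲] (p : Ω → ℝ)
    (hp : ∀ ω, 0 ≤ p ω) (hp1 : ∑ ω, p ω = 1)
    (S A Y : Ω → Fin 2) (W : Ω → 𝒲) (V1 : Ω → 𝒱₁) (V2 : Ω → 𝒱₂)
    (a : Fin 2) (v1 : 𝒱₁) (v2 : 𝒱₂)
    (r g b m : 𝒲 → ℝ)
    (hr : ∀ w, r w =
      cPr p (fun ω => Y ω = 1 ∧ A ω = a ∧ S ω = 1) (fun ω => V1 ω = v1 ∧ W ω = w))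
    (hg : ∀ w, g w = cPr p (fun ω => A ω = a) (fun ω => V1 ω = v1 ∧ W ω = w))
    (hb : ∀ w, b w = cPr p (fun ω => V2 ω = v2)
      (fun ω => Y ω = 1 ∧ A ω = a ∧ V1 ω = v1 ∧ W ω = w ∧ S ω = 1))
    (hm : ∀ w, m w = cE p (fun ω => ((Y ω : ℕ) : ℝ)) (fun ω => A ω = a ∧ V1 ω = v1 ∧ W ω = w))
    (hstrat : ∀ w, 0 < Pr p (fun ω => V1 ω = v1 ∧ W ω = w))
    (ε : ℝ) (hε : 0 < ε) (hεr : ∀ w, ε ≤ r w) (hεg : ∀ w, ε ≤ g w)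
    (ξ : Ω → ℝ)
    (hξ : ∀ ω, ξ ω =
      (if A ω = a ∧ Y ω = 1 ∧ S ω = 1 then (1:ℝ) else 0) / r (W ω) * m (W ω) *
          ((if V2 ω = v2 then (1:ℝ) else 0) - b (W ω)) +
        (if A ω = a then (1:ℝ) else 0) / g (W ω) * b (W ω) *
          (((Y ω : ℕ) : ℝ) - m (W ω)) +
        b (W ω) * m (W ω)) :
    cE p ξ (fun ω => V1 ω = v1) =
      ∑ w : 𝒲, b w * m w * cPr p (fun ω => W ω = w) (fun ω => V1 ω = v1) := by
  -- per-w vanishing of the first correction term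
  have hA : ∀ w : 𝒲, (∑ ω : Ω, if (A ω = a ∧ Y ω = 1 ∧ S ω = 1) ∧ (V1 ω = v1 ∧ W ω = w)
      then p ω * ((if V2 ω = v2 then (1:ℝ) else 0) - b w) else 0) = 0 := by
    intro w
    have hsplit : (∑ ω : Ω, if (A ω = a ∧ Y ω = 1 ∧ S ω = 1) ∧ (V1 ω = v1 ∧ W ω = w)
        then p ω * ((if V2 ω = v2 then (1:ℝ) else 0) - b w) else 0)
        = Pr p (fun ω => V2 ω = v2 ∧ (Y ω = 1 ∧ A ω = a ∧ V1 ω = v1 ∧ W ω = w ∧ S ω = 1))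
          - b w * Pr p (fun ω => Y ω = 1 ∧ A ω = a ∧ V1 ω = v1 ∧ W ω = w ∧ S ω = 1) := by
      unfold Pr
      rw [Finset.mul_sum, ← Finset.sum_sub_distrib]
      refine Finset.sum_congr rfl fun ω _ => ?_
      beta_reduce
      split_ifs <;> first | ring1 | tauto
    rw [hsplit, hb w]
    unfold cPr
    by_cases h : Pr p (fun ω => Y ω = 1 ∧ A ω = a ∧ V1 ω = v1 ∧ W ω = w ∧ S ω = 1) = 0
    · have h2 : Pr p (fun ω => V2 ω = v2 ∧ (Y ω = 1 ∧ A ω = a ∧ V1 ω = v1 ∧ W ω = w ∧ S ω = 1)) = 0 := by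
        refine Finset.sum_eq_zero fun ω _ => ?_
        split_ifs with hc
        · exact pr_zero p hp _ h ω hc.2
        · rfl
      rw [h, h2]; ring
    · rw [div_mul_cancel₀ _ h]; ring
  -- per-w vanishing of the second correction term
  have hB : ∀ w : 𝒲, (∑ ω : Ω, if A ω = a ∧ (V1 ω = v1 ∧ W ω = w)
      then p ω * (((Y ω : ℕ) : ℝ) - m w) else 0) = 0 := by
    intro w
    have hsplit : (∑ ω : Ω, if A ω = a ∧ (V1 ω = v1 ∧ W ω = w)
        then p ω * (((Y ω : ℕ) : ℝ) - m w) else 0)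
        = (∑ ω : Ω, if A ω = a ∧ V1 ω = v1 ∧ W ω = w then p ω * ((Y ω : ℕ) : ℝ) else 0)
          - m w * Pr p (fun ω => A ω = a ∧ V1 ω = v1 ∧ W ω = w) := by
      unfold Pr
      rw [Finset.mul_sum, ← Finset.sum_sub_distrib]
      refine Finset.sum_congr rfl fun ω _ => ?_
      beta_reduce
      split_ifs <;> first | ring1 | tauto
    rw [hsplit, hm w]
    unfold cE
    by_cases h : Pr p (fun ω => A ω = a ∧ V1 ω = v1 ∧ W ω = w) = 0
    · have h2 : (∑ ω : Ω, if A ω = a ∧ V1 ω = v1 ∧ W ω = w then p ω * ((Y ω : ℕ) : ℝ) else 0) = 0 := by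
        refine Finset.sum_eq_zero fun ω _ => ?_
        split_ifs with hc
        · rw [pr_zero p hp _ h ω hc]; ring
        · rfl
      rw [h, h2]; ring
    · rw [div_mul_cancel₀ _ h]; ring
  -- numerator identity
  have key : (∑ ω : Ω, if V1 ω = v1 then p ω * ξ ω else 0)
      = ∑ w : 𝒲, b w * m w * Pr p (fun ω => V1 ω = v1 ∧ W ω = w) := by
    have expand : ∀ ω : Ω, (if V1 ω = v1 then p ω * ξ ω else 0)
        = ∑ w : 𝒲,
          ((if (A ω = a ∧ Y ω = 1 ∧ S ω = 1) ∧ (V1 ω = v1 ∧ W ω = w)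
              then p ω * ((if V2 ω = v2 then (1:ℝ) else 0) - b w) else 0) * (m w / r w)
            + (if A ω = a ∧ (V1 ω = v1 ∧ W ω = w)
              then p ω * (((Y ω : ℕ) : ℝ) - m w) else 0) * (b w / g w)
            + (if V1 ω = v1 ∧ W ω = w then p ω * (b w * m w) else 0)) := by
      intro ω
      rw [Finset.sum_eq_single (W ω)]
      · rw [hξ ω]
        split_ifs <;> first | ring1 | tauto
      · intro w _ hw
        have hw' : ¬ W ω = w := fun h => hw h.symm
        split_ifs <;> first | ring1 | tauto
      · intro h; exact absurd (Finset.mem_univ (W ω)) h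
    rw [Finset.sum_congr rfl fun ω _ => expand ω, Finset.sum_comm]
    refine Finset.sum_congr rfl fun w _ => ?_
    rw [Finset.sum_add_distrib, Finset.sum_add_distrib, ← Finset.sum_mul, ← Finset.sum_mul,
      hA w, hB w]
    unfold Pr
    simp only [zero_mul, zero_add]
    rw [Finset.mul_sum]
    exact Finset.sum_congr rfl fun ω _ => by split_ifs <;> ring1
  unfold cE
  rw [key, Finset.sum_div]
  refine Finset.sum_congr rfl fun w _ => ?_
  unfold cPr
  have : Pr p (fun ω => W ω = w ∧ V1 ω = v1) = Pr p (fun ω => V1 ω = v1 ∧ W ω = w) := by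
    unfold Pr
    refine Finset.sum_congr rfl fun ω _ => ?_
    beta_reduce
    by_cases h : W ω = w ∧ V1 ω = v1
    · rw [if_pos h, if_pos ⟨h.2, h.1⟩]
    · rw [if_neg h, if_neg (fun h' => h ⟨h'.2, h'.1⟩)]
  rw [this]; ring
end

section
/- If V₂ ⊥ A | (W, V₁, Yₐ) and A=a implies Y=Yₐ, then P(V₂=v₂ | Yₐ=1, V₁=v₁, W=w) = P(V₂=v₂ | Y=1, A=a, V₁=v₁, W=w) whenever P(Yₐ=1, A=a, V₁=v₁, W=w) > 0. -/
open scoped Classical BigOperators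

/-! Consistency turns the conditioning event `{Y = 1, A = a, …}` into `{A = a} ∩ {Yₐ = 1, …}`;
conditional independence of `V₂` and `A` given `(W, V₁, Yₐ)` then lets us drop `A = a` from the
conditioning event. -/

section ConditionalProbability

variable {Ω : Type*} [Fintype Ω] (p : Ω → ℝ)

theorem Pr_mono (hp : ∀ ω, 0 ≤ p ω) {E F : Ω → Prop} (h : ∀ ω, E ω → F ω) :
    Pr p E ≤ Pr p F :=
  Finset.sum_le_sum fun ω _ => by split_ifs <;> simp_all

theorem cPr_and_eq_of_condIndep {E A F : Ω → Prop}
    (hAF : Pr p (fun ω => A ω ∧ F ω) ≠ 0) (hF : Pr p F ≠ 0)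
    (hindep : cPr p (fun ω => E ω ∧ A ω) F = cPr p E F * cPr p A F) :
    cPr p E (fun ω => A ω ∧ F ω) = cPr p E F := by
  simp only [cPr, and_assoc] at *
  rw [div_eq_iff hF] at hindep
  rw [hindep]
  field_simp

end ConditionalProbability

theorem stmt12_general {Ω 𝒲 𝒱₁ 𝒱₂ : Type*} [Fintype Ω] (p : Ω → ℝ)
    (hp : ∀ ω, 0 ≤ p ω)
    (W : Ω → 𝒲) (V1 : Ω → 𝒱₁) (V2 : Ω → 𝒱₂) (A Y Ya : Ω → Fin 2) (a : Fin 2)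
    (hconsistency : ∀ ω, A ω = a → Y ω = Ya ω)
    (hAmod : ∀ (v2' : 𝒱₂) (a' y : Fin 2) (w : 𝒲) (u : 𝒱₁),
      0 < Pr p (fun ω => W ω = w ∧ V1 ω = u ∧ Ya ω = y) →
      cPr p (fun ω => V2 ω = v2' ∧ A ω = a') (fun ω => W ω = w ∧ V1 ω = u ∧ Ya ω = y) =
        cPr p (fun ω => V2 ω = v2') (fun ω => W ω = w ∧ V1 ω = u ∧ Ya ω = y) *
          cPr p (fun ω => A ω = a') (fun ω => W ω = w ∧ V1 ω = u ∧ Ya ω = y))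
    (v1 : 𝒱₁) (v2 : 𝒱₂) (w : 𝒲)
    (hpos : 0 < Pr p (fun ω => Ya ω = 1 ∧ A ω = a ∧ V1 ω = v1 ∧ W ω = w)) :
    cPr p (fun ω => V2 ω = v2) (fun ω => Ya ω = 1 ∧ V1 ω = v1 ∧ W ω = w) =
      cPr p (fun ω => V2 ω = v2) (fun ω => Y ω = 1 ∧ A ω = a ∧ V1 ω = v1 ∧ W ω = w) := by
  set F : Ω → Prop := fun ω => W ω = w ∧ V1 ω = v1 ∧ Ya ω = 1
  have hYa : (fun ω => Ya ω = 1 ∧ V1 ω = v1 ∧ W ω = w) = F := by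
    funext ω; simp only [F, eq_iff_iff]; tauto
  have hY : (fun ω => Y ω = 1 ∧ A ω = a ∧ V1 ω = v1 ∧ W ω = w) = fun ω => A ω = a ∧ F ω := by
    funext ω
    simp only [F, eq_iff_iff]
    constructor
    · rintro ⟨hY, hA, hV1, hW⟩
      exact ⟨hA, hW, hV1, hconsistency ω hA ▸ hY⟩
    · rintro ⟨hA, hW, hV1, hYa⟩
      exact ⟨hconsistency ω hA ▸ hYa, hA, hV1, hW⟩
  have hAF : 0 < Pr p (fun ω => A ω = a ∧ F ω) := by
    convert hpos using 2
    funext ω; simp only [F, eq_iff_iff]; tauto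
  have hF : 0 < Pr p F := hAF.trans_le (Pr_mono p hp fun _ h => h.2)
  rw [hYa, hY]
  exact (cPr_and_eq_of_condIndep p hAF.ne' hF.ne' (hAmod v2 a 1 w v1 hF)).symm

/-- under V₂ ⊥ A | (W,V₁,Yₐ) and consistency,
P(V₂=v₂ | Yₐ=1, V₁=v₁, W=w) = P(V₂=v₂ | Y=1, A=a, V₁=v₁, W=w). -/
theorem stmt12 {Ω 𝒲 𝒱₁ 𝒱₂ : Type*} [Fintype Ω] (p : Ω → ℝ)
    (hp : ∀ ω, 0 ≤ p ω) (hp1 : ∑ ω, p ω = 1)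
    (W : Ω → 𝒲) (V1 : Ω → 𝒱₁) (V2 : Ω → 𝒱₂) (A Y Ya : Ω → Fin 2) (a : Fin 2)
    (hconsistency : ∀ ω, A ω = a → Y ω = Ya ω)
    (hAmod : ∀ (v2' : 𝒱₂) (a' y : Fin 2) (w : 𝒲) (u : 𝒱₁),
      0 < Pr p (fun ω => W ω = w ∧ V1 ω = u ∧ Ya ω = y) →
      cPr p (fun ω => V2 ω = v2' ∧ A ω = a') (fun ω => W ω = w ∧ V1 ω = u ∧ Ya ω = y) =
        cPr p (fun ω => V2 ω = v2') (fun ω => W ω = w ∧ V1 ω = u ∧ Ya ω = y) *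
          cPr p (fun ω => A ω = a') (fun ω => W ω = w ∧ V1 ω = u ∧ Ya ω = y))
    (v1 : 𝒱₁) (v2 : 𝒱₂) (w : 𝒲)
    (hpos : 0 < Pr p (fun ω => Ya ω = 1 ∧ A ω = a ∧ V1 ω = v1 ∧ W ω = w)) :
    cPr p (fun ω => V2 ω = v2) (fun ω => Ya ω = 1 ∧ V1 ω = v1 ∧ W ω = w) =
      cPr p (fun ω => V2 ω = v2) (fun ω => Y ω = 1 ∧ A ω = a ∧ V1 ω = v1 ∧ W ω = w) :=
  stmt12_general p hp W V1 V2 A Y Ya a hconsistency hAmod v1 v2 w hpos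
end
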